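/- arXiv:1805.04363 — 13 statements merged into one kernel-verified Lean document; each statement's English description precedes it below -/
import Mathlib

section
/- If every dense subset of C_k(X) is sequentially dense, then X is a γ_k-set, i.e., every open k-cover of X contains a countable subfamily that is a γ_k-cover of X. -/
open Filter Topology ContinuousMap

def SeqDense {Y : Type*} [TopologicalSpace Y] (A : Set Y) : Prop :=
  ∀ y : Y, ∃ u : ℕ → Y, (∀ n, u n ∈ A) ∧ Tendsto u atTop (𝓝 y)

/-- `𝒰` is an open k-cover of `X`: a family of open sets, not containing `X` itself,
such that every compact subset is contained in a member. -/
def IsKCover {X : Type*} [TopologicalSpace X] (𝒰 : Set (Set X)) : Prop :=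
  (∀ u ∈ 𝒰, IsOpen u) ∧ Set.univ ∉ 𝒰 ∧
    ∀ K : Set X, IsCompact K → ∃ u ∈ 𝒰, K ⊆ u

/-- `𝒰` is a γ_k-cover: infinite, not containing `X`, and every compact set is
contained in all but finitely many members. -/
def IsGammaKCover {X : Type*} [TopologicalSpace X] (𝒰 : Set (Set X)) : Prop :=
  𝒰.Infinite ∧ Set.univ ∉ 𝒰 ∧
    ∀ K : Set X, IsCompact K → {u ∈ 𝒰 | ¬ K ⊆ u}.Finite

lemma aux_sep {X : Type*} [TopologicalSpace X] [T35Space X] {K C : Set X}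
    (hK : IsCompact K) (hC : IsClosed C) (hd : Disjoint K C) :
    ∃ φ : C(X, ℝ), (∀ x ∈ K, φ x = 0) ∧ (∀ x ∈ C, φ x = 1) := by
  have hsep : ∀ x : K, ∃ f : X → unitInterval,
      Continuous f ∧ f x = 0 ∧ Set.EqOn f 1 C := fun x =>
    CompletelyRegularSpace.completely_regular (x : X) C hC (Set.disjoint_left.mp hd x.2)
  choose f hfc hf0 hf1 using hsep
  obtain ⟨t, ht⟩ := hK.elim_finite_subcover (fun x : K => {y | ((f x y : ℝ)) < 1/2})
    (fun x => isOpen_lt (continuous_subtype_val.comp (hfc x)) continuous_const)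
    (fun x hx => Set.mem_iUnion.mpr ⟨⟨x, hx⟩, by simp [hf0 ⟨x, hx⟩]⟩)
  refine ⟨⟨fun y => ∏ x ∈ t, max 0 (2 * (f x y : ℝ) - 1), ?_⟩, ?_, ?_⟩
  · exact continuous_finset_prod _ fun x _ =>
      continuous_const.max ((continuous_const.mul (continuous_subtype_val.comp (hfc x))).sub
        continuous_const)
  · intro y hy
    obtain ⟨x, hxt, hxy⟩ : ∃ x ∈ t, ((f x y : ℝ)) < 1/2 := by
      have := ht hy
      simpa using this
    exact Finset.prod_eq_zero hxt (by rw [max_eq_left]; linarith)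
  · intro y hy
    have : ∀ x ∈ t, max 0 (2 * (f x y : ℝ) - 1) = 1 := by
      intro x _
      have : f x y = 1 := hf1 x hy
      rw [this]; norm_num
    simp [Finset.prod_congr rfl this]

/-- If every dense subset of `C_k(X)` is sequentially dense, then `X` is a γ_k-set:
every open k-cover contains a countable γ_k-cover. -/
theorem stmt2 {X : Type*} [TopologicalSpace X] [T35Space X]
    (h : ∀ A : Set C(X, ℝ), Dense A → SeqDense A) :
    ∀ 𝒰 : Set (Set X), IsKCover 𝒰 →
      ∃ 𝒱 ⊆ 𝒰, 𝒱.Countable ∧ IsGammaKCover 𝒱 := by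
  intro 𝒰 h𝒰
  obtain ⟨hopen, huniv, hcov⟩ := h𝒰
  set A : Set C(X, ℝ) := {g | ∃ U ∈ 𝒰, ∀ x, x ∉ U → g x = 1} with hA
  have hdense : Dense A := by
    intro f
    rw [mem_closure_iff_nhds_basis
      (nhds_basis_uniformity' hasBasis_compactConvergenceUniformity)]
    rintro ⟨K, V⟩ ⟨hK, hV⟩
    obtain ⟨U, hUmem, hKU⟩ := hcov K hK
    obtain ⟨φ, hφ0, hφ1⟩ := aux_sep hK (hopen U hUmem).isClosed_compl
      (Set.disjoint_compl_right_iff_subset.mpr hKU)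
    refine ⟨φ + (1 - φ) * f, ⟨U, hUmem, fun x hx => ?_⟩, fun x hx => ?_⟩
    · have := hφ1 x hx
      simp [this]
    · have := hφ0 x hx
      simp only [ContinuousMap.add_apply, ContinuousMap.mul_apply, ContinuousMap.sub_apply,
        ContinuousMap.one_apply, this]
      simpa using refl_mem_uniformity hV
  obtain ⟨g, hgA, hgtend⟩ := h A hdense 0
  choose U hUmem hU1 using hgA
  have hgt := ContinuousMap.tendsto_iff_forall_isCompact_tendstoUniformlyOn.mp hgtend
  have key : ∀ K : Set X, IsCompact K → ∀ᶠ n in atTop, K ⊆ U n := by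
    intro K hK
    have := hgt K hK _ (Metric.dist_mem_uniformity one_pos)
    filter_upwards [this] with n hn x hx
    by_contra hxU
    have h1 : g n x = 1 := hU1 n x hxU
    have := hn x hx
    simp [h1] at this
  have hne : Nonempty X := by
    by_contra hemp
    obtain ⟨u, hu, -⟩ := hcov ∅ isCompact_empty
    have : u = Set.univ := Set.eq_univ_iff_forall.mpr fun x => absurd ⟨x⟩ hemp
    exact huniv (this ▸ hu)
  refine ⟨Set.range U, ?_, Set.countable_range U, ?_, ?_, ?_⟩
  · rintro _ ⟨n, rfl⟩; exact hUmem n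
  · -- infinite
    intro hfin
    have hx : ∀ u ∈ Set.range U, ∃ x, x ∉ u := by
      rintro _ ⟨n, rfl⟩
      exact Set.ne_univ_iff_exists_notMem _ |>.mp (fun hc => huniv (hc ▸ hUmem n))
    choose! p hp using hx
    have hKfin : (p '' Set.range U).Finite := hfin.image p
    obtain ⟨n, hn⟩ := (key _ hKfin.isCompact).exists
    exact hp (U n) ⟨n, rfl⟩ (hn (Set.mem_image_of_mem p ⟨n, rfl⟩))
  · rintro ⟨n, hn⟩; exact huniv (hn ▸ hUmem n)
  · intro K hK
    obtain ⟨N, hN⟩ := eventually_atTop.mp (key K hK)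
    refine ((Set.finite_Iio N).image U).subset ?_
    rintro u ⟨⟨n, rfl⟩, hnot⟩
    refine ⟨n, ?_, rfl⟩
    by_contra hlt
    exact hnot (hN n (le_of_not_gt hlt))
end

section
/- For a Tychonoff space X and an open k-cover U of X, the set D = {f ∈ C(X) : f restricted to X∖U is constantly 1 for some U ∈ U} is dense in C_k(X). -/
open Filter Topology ContinuousMap

open Uniformity

/-- Urysohn-type function in a Tychonoff space: for a compact `K` inside an open `u`,
there is a continuous real function that is `0` on `K` and `1` off `u`. -/
lemma exists_zero_one_of_t35 {X : Type*} [TopologicalSpace X] [T35Space X]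
    {K u : Set X} (hK : IsCompact K) (hu : IsOpen u) (hKu : K ⊆ u) :
    ∃ φ : C(X, ℝ), Set.EqOn φ 0 K ∧ Set.EqOn φ 1 uᶜ := by
  rcases K.eq_empty_or_nonempty with rfl | hne
  · exact ⟨1, fun x hx => hx.elim, fun x _ => rfl⟩
  have h : ∀ x ∈ K, ∃ F : C(X, ℝ), F x = 0 ∧ Set.EqOn F 1 uᶜ ∧ ∀ y, 0 ≤ F y := by
    intro x hx
    obtain ⟨f, hf, hf0, hf1⟩ := CompletelyRegularSpace.completely_regular x uᶜ
      hu.isClosed_compl (fun hc => hc (hKu hx))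
    refine ⟨⟨fun y => (f y : ℝ), by continuity⟩, ?_, ?_, ?_⟩
    · simp [hf0]
    · intro y hy
      simp [hf1 hy]
    · intro y
      exact (f y).2.1
  choose! F hF0 hF1 hFnn using h
  -- open neighborhoods where F x is small
  set V : X → Set X := fun x => {y | F x y < 1 / 2} with hV
  have hVnhds : ∀ x ∈ K, V x ∈ 𝓝 x := by
    intro x hx
    have : IsOpen (V x) := isOpen_lt (F x).continuous continuous_const
    exact this.mem_nhds (by simpa [hV, hF0 x hx] using (by norm_num : (0 : ℝ) < 1 / 2))
  obtain ⟨t, htK, htcov⟩ := hK.elim_nhds_subcover V hVnhds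
  have ht : t.Nonempty := by
    obtain ⟨y, hy⟩ := hne
    obtain ⟨z, hz, _⟩ := Set.mem_iUnion₂.mp (htcov hy)
    exact ⟨z, hz⟩
  set ψ : C(X, ℝ) := t.inf' ht F with hψ
  have hψ_apply : ∀ y, ψ y = t.inf' ht fun z => F z y := fun y =>
    ContinuousMap.inf'_apply ht F y
  refine ⟨(2 * ψ - 1) ⊔ 0, ?_, ?_⟩
  · intro x hx
    obtain ⟨z, hz, hzx⟩ := Set.mem_iUnion₂.mp (htcov hx)
    have h1 : ψ x < 1 / 2 := by
      rw [hψ_apply]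
      exact lt_of_le_of_lt (Finset.inf'_le _ hz) hzx
    have : (2 * ψ - 1 : C(X, ℝ)) x ≤ 0 := by
      simp only [ContinuousMap.sub_apply, ContinuousMap.mul_apply, ContinuousMap.one_apply]
      have : (2 : C(X, ℝ)) x = (2 : ℝ) := rfl
      rw [this]; linarith
    simp only [ContinuousMap.sup_apply, ContinuousMap.zero_apply, Pi.zero_apply]
    exact sup_eq_right.mpr this
  · intro x hx
    have h1 : ψ x = 1 := by
      rw [hψ_apply]
      apply le_antisymm
      · obtain ⟨z, hz⟩ := id ht
        calc t.inf' ht (fun z => F z x) ≤ F z x := Finset.inf'_le _ hz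
        _ = 1 := hF1 z (htK z hz) hx
      · apply Finset.le_inf'
        intro z hz
        simp [hF1 z (htK z hz) hx]
    have h2 : (2 * ψ - 1 : C(X, ℝ)) x = 1 := by
      simp only [ContinuousMap.sub_apply, ContinuousMap.mul_apply, ContinuousMap.one_apply]
      have : (2 : C(X, ℝ)) x = (2 : ℝ) := rfl
      rw [this, h1]; norm_num
    simp only [ContinuousMap.sup_apply, ContinuousMap.zero_apply, Pi.one_apply, h2]
    exact sup_eq_left.mpr (by norm_num)

/-- For a Tychonoff space `X` and an open k-cover `𝒰` of `X`, the set of continuous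
functions that are constantly `1` off some member of `𝒰` is dense in `C_k(X)`. -/
theorem stmt3 {X : Type*} [TopologicalSpace X] [T35Space X]
    (𝒰 : Set (Set X)) (h𝒰 : IsKCover 𝒰) :
    Dense {f : C(X, ℝ) | ∃ u ∈ 𝒰, ∀ x ∉ u, f x = 1} := by
  obtain ⟨hopen, -, hcov⟩ := h𝒰
  intro f
  have hb : (𝓝 f).HasBasis
      (fun p : Set X × Set (ℝ × ℝ) => IsCompact p.1 ∧ p.2 ∈ 𝓤 ℝ)
      (fun p => UniformSpace.ball f
        { fg : C(X, ℝ) × C(X, ℝ) | ∀ x ∈ p.1, (fg.1 x, fg.2 x) ∈ p.2 }) :=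
    nhds_basis_uniformity' ContinuousMap.hasBasis_compactConvergenceUniformity
  rw [mem_closure_iff_nhds_basis hb]
  rintro ⟨K, W⟩ ⟨hK, hW⟩
  obtain ⟨u, hu𝒰, hKu⟩ := hcov K hK
  obtain ⟨φ, hφ0, hφ1⟩ := exists_zero_one_of_t35 hK (hopen u hu𝒰) hKu
  refine ⟨(1 - φ) * f + φ, ⟨u, hu𝒰, ?_⟩, ?_⟩
  · intro x hx
    have h1 : φ x = 1 := hφ1 hx
    simp only [ContinuousMap.add_apply, ContinuousMap.mul_apply, ContinuousMap.sub_apply,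
      ContinuousMap.one_apply]
    rw [h1]; ring
  · intro x hx
    have h0 : φ x = 0 := hφ0 hx
    have heq : ((1 - φ) * f + φ) x = f x := by
      simp only [ContinuousMap.add_apply, ContinuousMap.mul_apply, ContinuousMap.sub_apply,
        ContinuousMap.one_apply, h0]
      ring
    rw [heq]
    exact refl_mem_uniformity hW
end

section
/- Let X be a topological space and let (f_n) be a sequence in C(X) with f_n ≡ 1 on X∖U_n for open sets U_n ⊊ X. If f_n converges to the zero function in the compact-open topology, then {U_n : n ∈ ℕ} is a γ_k-cover of X (assuming the family is infinite). -/
open Filter Topology ContinuousMap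

theorem ContinuousMap.eventually_forall_norm_lt_of_tendsto_zero {X E ι : Type*}
    [TopologicalSpace X] [SeminormedAddCommGroup E] {l : Filter ι} {f : ι → C(X, E)}
    (hf : Tendsto f l (𝓝 0)) {K : Set X} (hK : IsCompact K) {ε : ℝ} (hε : 0 < ε) :
    ∀ᶠ i in l, ∀ x ∈ K, ‖f i x‖ < ε := by
  have hunif := tendsto_iff_forall_isCompact_tendstoUniformlyOn.mp hf K hK
  filter_upwards [Metric.tendstoUniformlyOn_iff.mp hunif ε hε] with i hi x hx
  simpa using hi x hx

theorem stmt4_general {X : Type*} [TopologicalSpace X]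
    (f : ℕ → C(X, ℝ)) (U : ℕ → Set X)
    (hone : ∀ n, ∀ x ∉ U n, f n x = 1)
    (hconv : Tendsto f atTop (𝓝 0)) :
    ∀ K : Set X, IsCompact K → {n : ℕ | ¬ K ⊆ U n}.Finite := by
  intro K hK
  rw [← eventually_cofinite, Nat.cofinite_eq_atTop]
  filter_upwards [eventually_forall_norm_lt_of_tendsto_zero hconv hK one_pos] with n hn x hx
  by_contra hxU
  simpa [hone n x hxU] using hn x hx

/-- If `f_n ≡ 1` off the proper open set `U_n` and `f_n → 0` in the compact-open
topology, and the family `{U_n}` is infinite, then `{U_n}` is a γ_k-cover of `X`. -/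
theorem stmt4 {X : Type*} [TopologicalSpace X]
    (f : ℕ → C(X, ℝ)) (U : ℕ → Set X)
    (hopen : ∀ n, IsOpen (U n)) (hproper : ∀ n, U n ≠ Set.univ)
    (hone : ∀ n, ∀ x ∉ U n, f n x = 1)
    (hconv : Tendsto f atTop (𝓝 0))
    (hinf : (Set.range U).Infinite) :
    ∀ K : Set X, IsCompact K → {n : ℕ | ¬ K ⊆ U n}.Finite :=
  stmt4_general f U hone hconv
end

section
/- If X satisfies S_1(K,K) (the selection principle for k-covers) and X has a countable dense subset in C_k(X)-sense, i.e., C_k(X) is separable, then C_k(X) satisfies S_1(D,D): for every sequence (D_n) of dense subsets of C_k(X) one can choose f_n ∈ D_n so that {f_n : n ∈ ℕ} is dense in C_k(X). -/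
/-!
If `X` is compact, `C_k(X)` is a separable metric space, hence second countable, and `f_n ∈ D_n`
can be picked inside the `n`-th member of a countable base.

Otherwise fix a dense sequence `(q_m)` and `ε > 0`. By complete regularity a member of a dense set
can be `ε`-close to `q_m` on a compact set and `ε`-far at a point outside it, so for each dense
`D_n` the sets `{x | |q_m x - f x| < ε}`, `f ∈ D_n`, form a `k`-cover. Applying `S_1(K, K)` to a
sequence of such covers gives `f_k ∈ D_{n_k}` such that `q_m` is `ε`-approximated on every compact
set by some `f_k`. Splitting `ℕ` into infinitely many infinite pieces, one for each pair
`(m, ε = 1 / (j + 1))`, combines these selections into one whose range is dense.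
-/

open Filter Topology ContinuousMap

open Set TopologicalSpace

/-- The selection principle `S_1(K, K)`. -/
def S1KCovers (X : Type*) [TopologicalSpace X] : Prop :=
  ∀ 𝒰 : ℕ → Set (Set X), (∀ n, IsKCover (𝒰 n)) →
    ∃ u : ℕ → Set X, (∀ n, u n ∈ 𝒰 n) ∧ ∀ K : Set X, IsCompact K → ∃ n, K ⊆ u n

theorem exists_seq_mem_dense_range_of_secondCountable {α : Type*}
    [TopologicalSpace α] [SecondCountableTopology α] [Nonempty α] {D : ℕ → Set α}
    (hD : ∀ n, Dense (D n)) : ∃ f : ℕ → α, (∀ n, f n ∈ D n) ∧ Dense (range f) := by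
  obtain ⟨b, hbc, hb_empty, hb⟩ := exists_countable_basis α
  obtain ⟨e, rfl⟩ := hbc.exists_eq_range (.of_sUnion_eq_univ hb.sUnion_eq)
  choose f hfe hfD using fun n => (hD n).inter_open_nonempty _ (hb.isOpen (mem_range_self n))
    (nonempty_iff_ne_empty.mpr (ne_of_mem_of_not_mem (mem_range_self n) hb_empty))
  refine ⟨f, hfD, hb.dense_iff.mpr ?_⟩
  rintro _ ⟨n, rfl⟩ -
  exact ⟨f n, hfe n, mem_range_self n⟩

namespace ContinuousMap

section Metric

variable {X β : Type*} [TopologicalSpace X] [PseudoMetricSpace β]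

theorem hasBasis_nhds_dist_lt (f : C(X, β)) :
    (𝓝 f).HasBasis (fun p : Set X × ℝ => IsCompact p.1 ∧ 0 < p.2)
      (fun p => {g | ∀ x ∈ p.1, dist (f x) (g x) < p.2}) :=
  nhds_basis_uniformity' Metric.uniformity_basis_dist.compactConvergenceUniformity

theorem dense_iff_forall_isCompact_exists_dist_lt {S : Set C(X, β)} :
    Dense S ↔ ∀ g : C(X, β), ∀ K, IsCompact K → ∀ ε > 0,
      ∃ f ∈ S, ∀ x ∈ K, dist (g x) (f x) < ε := by
  simp only [Dense, mem_closure_iff_nhds_basis (hasBasis_nhds_dist_lt _), Prod.forall, and_imp,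
    gt_iff_lt, mem_ofPred_eq, ← imp_forall_iff]

end Metric

variable {X : Type*} [TopologicalSpace X] [CompletelyRegularSpace X]

theorem exists_mem_dist_lt_on_le_dist_at {D : Set C(X, ℝ)} (hD : Dense D) (g : C(X, ℝ))
    {ε : ℝ} (hε : 0 < ε) {K : Set X} (hK : IsCompact K) {x₀ : X} (hx₀ : x₀ ∉ closure K) :
    ∃ f ∈ D, (∀ x ∈ K, dist (g x) (f x) < ε) ∧ ε ≤ dist (g x₀) (f x₀) := by
  obtain ⟨φ, hφ, hφx₀, hφK⟩ :=
    CompletelyRegularSpace.completely_regular x₀ _ isClosed_closure hx₀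
  let g' : C(X, ℝ) := ⟨fun x => g x + 2 * ε * (1 - φ x), by fun_prop⟩
  have hg'K : ∀ x ∈ K, g' x = g x := fun x hx => by
    simp [g', hφK (subset_closure hx)]
  have hg'x₀ : dist (g x₀) (g' x₀) = 2 * ε := by
    simp [g', hφx₀, abs_of_pos hε]
  obtain ⟨f, hfD, hf⟩ := dense_iff_forall_isCompact_exists_dist_lt.mp hD g' _
    (hK.union isCompact_singleton) ε hε
  refine ⟨f, hfD, fun x hx => hg'K x hx ▸ hf x (.inl hx), ?_⟩
  have := dist_triangle (g x₀) (f x₀) (g' x₀)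
  rw [dist_comm (f x₀)] at this
  linarith [hf x₀ (.inr rfl)]

theorem isKCover_dist_lt_of_dense [NoncompactSpace X] {D : Set C(X, ℝ)} (hD : Dense D)
    (g : C(X, ℝ)) {ε : ℝ} (hε : 0 < ε) :
    IsKCover ((fun f : C(X, ℝ) => {x | dist (g x) (f x) < ε}) '' D \ {univ}) := by
  refine ⟨?_, fun h => h.2 rfl, fun K hK => ?_⟩
  · rintro _ ⟨⟨f, -, rfl⟩, -⟩
    exact isOpen_lt (by fun_prop) continuous_const
  obtain ⟨x₀, hx₀⟩ := ne_univ_iff_exists_notMem _ |>.mp hK.closure.ne_univ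
  obtain ⟨f, hfD, hfK, hfx₀⟩ := exists_mem_dist_lt_on_le_dist_at hD g hε hK hx₀
  refine ⟨_, ⟨⟨f, hfD, rfl⟩, fun h => ?_⟩, hfK⟩
  rw [mem_singleton_iff, eq_univ_iff_forall] at h
  exact hfx₀.not_gt (h x₀)

theorem exists_seq_mem_forall_isCompact_exists_dist_lt (hX : S1KCovers X) [NoncompactSpace X]
    {E : ℕ → Set C(X, ℝ)} (hE : ∀ k, Dense (E k)) (g : C(X, ℝ)) {ε : ℝ} (hε : 0 < ε) :
    ∃ h : ℕ → C(X, ℝ), (∀ k, h k ∈ E k) ∧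
      ∀ K, IsCompact K → ∃ k, ∀ x ∈ K, dist (g x) (h k x) < ε := by
  obtain ⟨u, hu, hcover⟩ := hX _ fun k => isKCover_dist_lt_of_dense (hE k) g hε
  choose h hhE hhu using fun k => (hu k).1
  refine ⟨h, hhE, fun K hK => ?_⟩
  obtain ⟨k, hk⟩ := hcover K hK
  exact ⟨k, fun x hx => (hhu k ▸ hk) hx⟩

theorem exists_seq_mem_dense_range_of_s1KCovers (hX : S1KCovers X) [NoncompactSpace X]
    [SeparableSpace C(X, ℝ)] {D : ℕ → Set C(X, ℝ)} (hD : ∀ n, Dense (D n)) :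
    ∃ f : ℕ → C(X, ℝ), (∀ n, f n ∈ D n) ∧ Dense (range f) := by
  obtain ⟨q, hq⟩ := exists_dense_seq C(X, ℝ)
  let e : ℕ ≃ (ℕ × ℕ) × ℕ := (Denumerable.eqv _).symm
  have hsel (p : ℕ × ℕ) : ∃ h : ℕ → C(X, ℝ), (∀ k, h k ∈ D (e.symm (p, k))) ∧
      ∀ K, IsCompact K → ∃ k, ∀ x ∈ K, dist (q p.1 x) (h k x) < 1 / (p.2 + 1) :=
    exists_seq_mem_forall_isCompact_exists_dist_lt hX (fun _ => hD _) _ Nat.one_div_pos_of_nat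
  choose h hhD hh using hsel
  refine ⟨fun n => h (e n).1 (e n).2, fun n => by simpa using hhD (e n).1 (e n).2, ?_⟩
  refine dense_iff_forall_isCompact_exists_dist_lt.mpr fun g K hK ε hε => ?_
  obtain ⟨_, ⟨m, rfl⟩, hm⟩ :=
    dense_iff_forall_isCompact_exists_dist_lt.mp hq g K hK (ε / 2) (half_pos hε)
  obtain ⟨j, hj⟩ := exists_nat_one_div_lt (half_pos hε)
  obtain ⟨k, hk⟩ := hh (m, j) K hK
  refine ⟨_, ⟨e.symm ((m, j), k), rfl⟩, fun x hx => ?_⟩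
  simp only [Equiv.apply_symm_apply]
  calc dist (g x) (h (m, j) k x) ≤ dist (g x) (q m x) + dist (q m x) (h (m, j) k x) :=
        dist_triangle _ _ _
    _ < ε / 2 + ε / 2 := add_lt_add (hm x hx) ((hk x hx).trans hj)
    _ = ε := add_halves ε

end ContinuousMap

/-- If `X` satisfies `S_1(K, K)` and `C_k(X)` is separable, then `C_k(X)` satisfies
`S_1(D, D)` (R-separability). -/
theorem stmt5 {X : Type*} [TopologicalSpace X] [T35Space X]
    (hX : ∀ 𝒰 : ℕ → Set (Set X), (∀ n, IsKCover (𝒰 n)) →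
      ∃ u : ℕ → Set X, (∀ n, u n ∈ 𝒰 n) ∧
        ∀ K : Set X, IsCompact K → ∃ n, K ⊆ u n)
    (hsep : ∃ D : Set C(X, ℝ), D.Countable ∧ Dense D) :
    ∀ D : ℕ → Set C(X, ℝ), (∀ n, Dense (D n)) →
      ∃ f : ℕ → C(X, ℝ), (∀ n, f n ∈ D n) ∧ Dense (Set.range f) := by
  intro D hD
  have : SeparableSpace C(X, ℝ) := ⟨hsep⟩
  by_cases hX_compact : CompactSpace X
  · have := UniformSpace.secondCountable_of_separable C(X, ℝ)
    exact exists_seq_mem_dense_range_of_secondCountable hD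
  · have := not_compactSpace_iff.mp hX_compact
    exact ContinuousMap.exists_seq_mem_dense_range_of_s1KCovers hX hD
end

section
/- If C_k(X) satisfies S_1(D,D) (R-separability), then X satisfies S_1(K,K), provided C_k(X) is separable. -/
open Filter Topology ContinuousMap
open scoped Uniformity

-- Urysohn for completely regular: compact inside open
lemma urysohn_cr {X : Type*} [TopologicalSpace X] [T35Space X] {K u : Set X}
    (hK : IsCompact K) (hu : IsOpen u) (hKu : K ⊆ u) :
    ∃ h : C(X, ℝ), Set.EqOn h 0 K ∧ Set.EqOn h 1 uᶜ ∧ ∀ x, h x ∈ Set.Icc (0:ℝ) 1 := by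
  have hreg : ∀ x : X, ∃ f : C(X, ℝ), (x ∈ K → f x = 0) ∧ Set.EqOn f 1 uᶜ ∧
      ∀ y, f y ∈ Set.Icc (0:ℝ) 1 := by
    intro x
    by_cases hx : x ∈ K
    · obtain ⟨f, hfc, hfx, hfK⟩ := CompletelyRegularSpace.completely_regular x uᶜ
        hu.isClosed_compl (by simp [hKu hx])
      refine ⟨⟨fun y => (f y : ℝ), continuous_subtype_val.comp hfc⟩, fun _ => by simp [hfx],
        fun y hy => by simpa using congrArg Subtype.val (hfK hy), fun y => (f y).2⟩
    · exact ⟨1, fun h => absurd h hx, fun y hy => rfl, fun y => by simp⟩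
  choose f hf0 hf1 hficc using hreg
  have hcov : K ⊆ ⋃ x ∈ K, {y | f x y < 1/2} := fun x hx =>
    Set.mem_biUnion hx (by simp [hf0 x hx])
  obtain ⟨t, hts, htfin, hcov'⟩ := hK.elim_finite_subcover_image
    (fun x _ => isOpen_lt (f x).continuous continuous_const) hcov
  refine ⟨⟨fun y => ∏ x ∈ htfin.toFinset, max (2 * f x y - 1) 0, by
      apply continuous_finset_prod
      intro x _
      exact ((continuous_const.mul (f x).continuous).sub continuous_const).max continuous_const⟩,
      ?_, ?_, ?_⟩
  · intro y hy
    obtain ⟨x, hxt, hxy⟩ := Set.mem_iUnion₂.1 (hcov' hy)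
    refine Finset.prod_eq_zero (htfin.mem_toFinset.2 hxt) ?_
    have : f x y < 1/2 := hxy
    simp only [max_eq_right_iff]
    linarith
  · intro y hy
    refine Finset.prod_eq_one fun x _ => ?_
    have : f x y = 1 := hf1 x hy
    rw [this]; norm_num
  · intro y
    constructor
    · exact Finset.prod_nonneg fun x _ => le_max_right _ _
    · refine Finset.prod_le_one (fun x _ => le_max_right _ _) fun x _ => ?_
      have := (hficc x y).2
      simp only [max_le_iff]
      constructor <;> linarith [zero_le_one (α := ℝ)]

/-- If `C_k(X)` is separable and satisfies `S_1(D, D)`, then `X` satisfies `S_1(K, K)`. -/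
theorem stmt6 {X : Type*} [TopologicalSpace X] [T35Space X]
    (hsep : ∃ D : Set C(X, ℝ), D.Countable ∧ Dense D)
    (hDD : ∀ D : ℕ → Set C(X, ℝ), (∀ n, Dense (D n)) →
      ∃ f : ℕ → C(X, ℝ), (∀ n, f n ∈ D n) ∧ Dense (Set.range f)) :
    ∀ 𝒰 : ℕ → Set (Set X), (∀ n, IsKCover (𝒰 n)) →
      ∃ u : ℕ → Set X, (∀ n, u n ∈ 𝒰 n) ∧
        ∀ K : Set X, IsCompact K → ∃ n, K ⊆ u n := by
  intro 𝒰 h𝒰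
  set D : ℕ → Set C(X, ℝ) := fun n => {f | ∃ u ∈ 𝒰 n, Set.EqOn f 1 uᶜ} with hD
  have hbasis : (𝓤 C(X, ℝ)).HasBasis
      (fun p : Set X × Set (ℝ × ℝ) => IsCompact p.1 ∧ p.2 ∈ 𝓤 ℝ) fun p =>
      { fg : C(X, ℝ) × C(X, ℝ) | ∀ x ∈ p.1, (fg.1 x, fg.2 x) ∈ p.2 } :=
    ContinuousMap.hasBasis_compactConvergenceUniformity
  have hdense : ∀ n, Dense (D n) := by
    intro n
    rw [dense_iff_inter_open]
    intro O hO ⟨g, hg⟩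
    have hO' : O ∈ 𝓝 g := hO.mem_nhds hg
    rw [(nhds_basis_uniformity' hbasis).mem_iff] at hO'
    obtain ⟨⟨K, V⟩, ⟨hKc, hV⟩, hsub⟩ := hO'
    obtain ⟨u, hu, hKu⟩ := (h𝒰 n).2.2 K hKc
    obtain ⟨h, hh0, hh1, _⟩ := urysohn_cr hKc ((h𝒰 n).1 u hu) hKu
    refine ⟨g * (1 - h) + h, hsub ?_, ⟨u, hu, ?_⟩⟩
    · intro x hx
      have : h x = 0 := hh0 hx
      simp only [Set.mem_setOf_eq, ContinuousMap.add_apply, ContinuousMap.mul_apply,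
        ContinuousMap.sub_apply, ContinuousMap.one_apply, this]
      simpa using refl_mem_uniformity hV
    · intro x hx
      have : h x = 1 := hh1 hx
      simp [this]
  obtain ⟨f, hfD, hfdense⟩ := hDD D hdense
  choose u hu hfu using fun n => hfD n
  refine ⟨u, hu, fun K hK => ?_⟩
  set V : Set (ℝ × ℝ) := {p | dist p.1 p.2 < 1} with hVdef
  have hV : V ∈ 𝓤 ℝ := Metric.dist_mem_uniformity one_pos
  have hnhds : {φ : C(X, ℝ) | ∀ x ∈ K, ((0 : C(X, ℝ)) x, φ x) ∈ V} ∈ 𝓝 (0 : C(X, ℝ)) := by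
    rw [(nhds_basis_uniformity' hbasis).mem_iff]
    exact ⟨(K, V), ⟨hK, hV⟩, fun φ hφ => hφ⟩
  obtain ⟨φ, hφmem, n, rfl⟩ := mem_closure_iff_nhds.1 (hfdense 0) _ hnhds
  refine ⟨n, fun x hx => ?_⟩
  by_contra hxu
  have h1 : f n x = 1 := hfu n (by exact hxu)
  have := hφmem x hx
  rw [hVdef] at this
  simp [h1] at this
end

section
/- If C_k(X) satisfies S_1(D, Ω_0) (for each sequence of dense sets one can choose points clustering at 0), and C_k(X) is separable, then C_k(X) satisfies S_1(D,D). -/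
open Filter Topology ContinuousMap

/-- If `C_k(X)` is separable and satisfies `S_1(D, Ω_0)`, then it satisfies
`S_1(D, D)`. -/
theorem stmt9 {X : Type*} [TopologicalSpace X] [T35Space X]
    (hsep : ∃ D : Set C(X, ℝ), D.Countable ∧ Dense D)
    (h : ∀ D : ℕ → Set C(X, ℝ), (∀ n, Dense (D n)) →
      ∃ f : ℕ → C(X, ℝ), (∀ n, f n ∈ D n) ∧
        (0 : C(X, ℝ)) ∈ closure (Set.range f)) :
    ∀ D : ℕ → Set C(X, ℝ), (∀ n, Dense (D n)) →
      ∃ f : ℕ → C(X, ℝ), (∀ n, f n ∈ D n) ∧ Dense (Set.range f) := by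
  intro D hD
  obtain ⟨D₀, hc, hd⟩ := hsep
  have hne : D₀.Nonempty := hd.nonempty
  obtain ⟨d, rfl⟩ := hc.exists_eq_range hne
  -- pairing
  set p : ℕ × ℕ ≃ ℕ := Nat.pairEquiv
  -- for each j, translated dense sets
  have key : ∀ j : ℕ, ∃ F : ℕ → C(X, ℝ),
      (∀ n, F n + d j ∈ D (p (j, n))) ∧
      (0 : C(X, ℝ)) ∈ closure (Set.range F) := by
    intro j
    have := h (fun n => (Homeomorph.addRight (d j)) ⁻¹' D (p (j, n)))
      (fun n => (hD _).preimage (Homeomorph.addRight (d j)).isOpenMap)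
    obtain ⟨F, hF1, hF2⟩ := this
    exact ⟨F, fun n => hF1 n, hF2⟩
  choose F hF1 hF2 using key
  refine ⟨fun m => F (p.symm m).1 (p.symm m).2 + d (p.symm m).1, ?_, ?_⟩
  · intro m
    have := hF1 (p.symm m).1 (p.symm m).2
    simpa [Prod.mk.eta, p.apply_symm_apply] using this
  · set f : ℕ → C(X, ℝ) := fun m => F (p.symm m).1 (p.symm m).2 + d (p.symm m).1
    have hdj : ∀ j, d j ∈ closure (Set.range f) := by
      intro j
      have h1 : d j ∈ closure ((Homeomorph.addRight (d j)) '' Set.range (F j)) := by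
        rw [← (Homeomorph.addRight (d j)).image_closure]
        exact ⟨0, hF2 j, by simp⟩
      refine closure_mono ?_ h1
      rintro _ ⟨_, ⟨n, rfl⟩, rfl⟩
      refine ⟨p (j, n), ?_⟩
      simp only [f, p.symm_apply_apply]
      rfl
    rw [dense_iff_closure_eq]
    apply Set.eq_univ_of_univ_subset
    calc (Set.univ : Set C(X, ℝ)) = closure (Set.range d) := (dense_iff_closure_eq.mp hd).symm
      _ ⊆ closure (closure (Set.range f)) := closure_mono (Set.range_subset_iff.mpr hdj)
      _ = closure (Set.range f) := closure_closure
end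

section
/- If X satisfies S_1(Γ_k^{sh}, K), then C_k(X) satisfies S_1(Γ_0, Ω_0): for every sequence of sequences each converging to 0 in C_k(X), one can select one function from each sequence so that 0 is in the closure of the selected set. -/
open Filter Topology ContinuousMap
open scoped Uniformity

def IsCozero {X : Type*} [TopologicalSpace X] (u : Set X) : Prop :=
  ∃ f : C(X, ℝ), u = {x | f x ≠ 0}

def IsZeroSet {X : Type*} [TopologicalSpace X] (s : Set X) : Prop :=
  ∃ f : C(X, ℝ), s = {x | f x = 0}

/-- `𝒰` is a γ_k-shrinkable cozero γ_k-cover of `X`: a γ_k-cover by cozero sets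
admitting a γ_k-cover of zero-sets shrinking it. -/
def IsShrinkableGammaKCover {X : Type*} [TopologicalSpace X] (𝒰 : Set (Set X)) : Prop :=
  𝒰.Infinite ∧ Set.univ ∉ 𝒰 ∧ (∀ u ∈ 𝒰, IsCozero u) ∧
    (∀ K : Set X, IsCompact K → {u ∈ 𝒰 | ¬ K ⊆ u}.Finite) ∧
    ∃ F : Set X → Set X, (∀ u ∈ 𝒰, IsZeroSet (F u) ∧ F u ⊆ u) ∧
      ∀ K : Set X, IsCompact K → {u ∈ 𝒰 | ¬ K ⊆ F u}.Finite

namespace Stmt10Aux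

variable {X : Type*} [TopologicalSpace X]

/-- The basic cozero set associated to `f` and `ε`. -/
def W (f : ℕ → C(X, ℝ)) (ε : ℝ) (m : ℕ) : Set X := {x | |f m x| < ε}

/-- The zero-set shrinking. -/
def S (f : ℕ → C(X, ℝ)) (ε : ℝ) (m : ℕ) : Set X := {x | |f m x| ≤ ε / 2}

lemma isCozero_W (f : ℕ → C(X, ℝ)) (ε : ℝ) (m : ℕ) : IsCozero (W f ε m) := by
  refine ⟨ContinuousMap.mk (fun x => max (ε - |f m x|) 0) (by fun_prop), ?_⟩
  ext x
  simp only [W, Set.mem_setOf_eq, ContinuousMap.coe_mk, ne_eq, max_eq_right_iff, sub_nonpos,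
    not_le]

lemma isZeroSet_S (f : ℕ → C(X, ℝ)) (ε : ℝ) (m : ℕ) : IsZeroSet (S f ε m) := by
  refine ⟨ContinuousMap.mk (fun x => max (|f m x| - ε / 2) 0) (by fun_prop), ?_⟩
  ext x
  simp only [S, Set.mem_setOf_eq, ContinuousMap.coe_mk, max_eq_right_iff, sub_nonpos]

lemma S_subset_W (f : ℕ → C(X, ℝ)) {ε : ℝ} (hε : 0 < ε) (m : ℕ) : S f ε m ⊆ W f ε m := by
  intro x hx
  simp only [S, Set.mem_setOf_eq] at hx
  simp only [W, Set.mem_setOf_eq]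
  linarith

lemma eventually_subset (f : ℕ → C(X, ℝ)) (hf : Tendsto f atTop (𝓝 0)) {K : Set X}
    (hK : IsCompact K) {δ : ℝ} (hδ : 0 < δ) :
    ∃ N, ∀ m, N ≤ m → ∀ x ∈ K, |f m x| < δ := by
  have h2 := (ContinuousMap.tendsto_iff_forall_isCompact_tendstoUniformlyOn.mp hf) K hK
  rw [Metric.tendstoUniformlyOn_iff] at h2
  obtain ⟨N, hN⟩ := eventually_atTop.mp (h2 δ hδ)
  exact ⟨N, fun m hm x hx => by simpa [Real.dist_eq, abs_sub_comm] using hN m hm x hx⟩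

/-- The cover built from the sequence `f` at scale `ε`. -/
def 𝒰 (f : ℕ → C(X, ℝ)) (ε : ℝ) : Set (Set X) := {u | ∃ m, u = W f ε m}

lemma cover_shrinkable (f : ℕ → C(X, ℝ)) (hf : Tendsto f atTop (𝓝 0)) {ε : ℝ} (hε : 0 < ε)
    (hne : ∀ m, W f ε m ≠ Set.univ) : IsShrinkableGammaKCover (𝒰 f ε) := by
  have hrange : 𝒰 f ε = Set.range (W f ε) := by
    ext u; simp [𝒰, eq_comm, Set.range]
  refine ⟨?_, ?_, ?_, ?_, ?_⟩
  · -- infinite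
    rw [hrange]
    intro hfin
    have : Finite (Set.range (W f ε)) := hfin
    obtain ⟨v, hv⟩ := Finite.exists_infinite_fiber (Set.rangeFactorization (W f ε))
    have hvinf : {m | W f ε m = (v : Set X)}.Infinite :=
      ((Set.infinite_coe_iff.mp hv)).mono fun m hm => by
        simpa [Set.rangeFactorization, Subtype.ext_iff] using hm
    have hvuniv : (v : Set X) = Set.univ := by
      ext x
      simp only [Set.mem_univ, iff_true]
      obtain ⟨N, hN⟩ := eventually_subset f hf isCompact_singleton hε
      obtain ⟨m, hm, hmN⟩ := hvinf.exists_gt N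
      rw [← hm]
      exact hN m hmN.le x rfl
    obtain ⟨m, hm⟩ := v.2
    exact hne m (hm.trans hvuniv)
  · -- univ not in
    rintro ⟨m, hm⟩
    exact hne m hm.symm
  · rintro u ⟨m, rfl⟩
    exact isCozero_W f ε m
  · intro K hK
    obtain ⟨N, hN⟩ := eventually_subset f hf hK hε
    have hsub : {u ∈ 𝒰 f ε | ¬ K ⊆ u} ⊆ (W f ε) '' (Set.Iio N) := by
      rintro u ⟨⟨m, rfl⟩, hKu⟩
      refine ⟨m, ?_, rfl⟩
      by_contra hm
      exact hKu fun x hx => hN m (le_of_not_gt hm) x hx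
    exact ((Set.finite_Iio N).image _).subset hsub
  · classical
    refine ⟨fun u => if h : ∃ m, u = W f ε m then S f ε h.choose else ∅, ?_, ?_⟩
    · rintro u hu
      obtain ⟨m, rfl⟩ := hu
      have h : ∃ m', W f ε m = W f ε m' := ⟨m, rfl⟩
      simp only [dif_pos h]
      refine ⟨isZeroSet_S f ε _, fun x hx => ?_⟩
      rw [h.choose_spec]
      exact S_subset_W f hε _ hx
    · intro K hK
      obtain ⟨N, hN⟩ := eventually_subset f hf hK (by linarith : (0:ℝ) < ε / 2)
      have hsub : {u ∈ 𝒰 f ε | ¬ K ⊆ (if h : ∃ m, u = W f ε m then S f ε h.choose else ∅)} ⊆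
          (W f ε) '' (Set.Iio N) := by
        rintro u ⟨hu, hKu⟩
        obtain ⟨m, rfl⟩ := hu
        have h : ∃ m', W f ε m = W f ε m' := ⟨m, rfl⟩
        rw [dif_pos h] at hKu
        refine ⟨h.choose, ?_, h.choose_spec.symm⟩
        by_contra hm
        exact hKu fun x hx => le_of_lt (hN _ (le_of_not_gt hm) x hx)
      exact ((Set.finite_Iio N).image _).subset hsub

lemma nhds_basis_zero :
    (𝓝 (0 : C(X, ℝ))).HasBasis (fun p : Set X × Set (ℝ × ℝ) => IsCompact p.1 ∧ p.2 ∈ 𝓤 ℝ)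
      fun p => {g : C(X, ℝ) | ∀ x ∈ p.1, ((0:ℝ), g x) ∈ p.2} := by
  have := nhds_basis_uniformity' (x := (0 : C(X, ℝ)))
    ContinuousMap.hasBasis_compactConvergenceUniformity
  refine this.to_hasBasis (fun p hp => ⟨p, hp, fun g hg x hx => by simpa using hg x hx⟩)
    (fun p hp => ⟨p, hp, fun g hg x hx => by simpa using hg x hx⟩)

end Stmt10Aux

namespace Stmt10Aux

lemma mem_𝒰 {X : Type*} [TopologicalSpace X] {u : Set X} {f : ℕ → C(X, ℝ)} {ε : ℝ} :
    u ∈ 𝒰 f ε ↔ ∃ m, u = W f ε m := Iff.rfl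

lemma mem_W {X : Type*} [TopologicalSpace X] {x : X} {f : ℕ → C(X, ℝ)} {ε : ℝ} {m : ℕ} :
    x ∈ W f ε m ↔ |f m x| < ε := Iff.rfl

end Stmt10Aux

/-- If `X` satisfies `S_1(Γ_k^{sh}, K)`, then `C_k(X)` satisfies `S_1(Γ_0, Ω_0)`:
from every sequence of sequences converging to `0` one may select one term from each
so that `0` lies in the closure of the selected set. -/
theorem stmt10 {X : Type*} [TopologicalSpace X] [T35Space X]
    (hX : ∀ 𝒰 : ℕ → Set (Set X), (∀ i, IsShrinkableGammaKCover (𝒰 i)) →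
      ∃ u : ℕ → Set X, (∀ i, u i ∈ 𝒰 i) ∧
        ∀ K : Set X, IsCompact K → ∃ i, K ⊆ u i) :
    ∀ g : ℕ → ℕ → C(X, ℝ), (∀ i, Tendsto (g i) atTop (𝓝 0)) →
      ∃ m : ℕ → ℕ,
        (0 : C(X, ℝ)) ∈ closure (Set.range fun i => g i (m i)) := by
  classical
  intro g hg
  set εr : ℕ → ℝ := fun i => 1 / ((i : ℝ) + 1) with hεr
  have hεpos : ∀ i : ℕ, (0 : ℝ) < εr i := fun i => by positivity
  have hmono : ∀ i₀ i : ℕ, i₀ ≤ i → εr i ≤ εr i₀ := by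
    intro i₀ i h
    apply one_div_le_one_div_of_le (by positivity)
    have : (i₀ : ℝ) ≤ (i : ℝ) := Nat.cast_le.mpr h
    linarith
  -- a sufficient criterion for `0` being in the closure
  have hclos : ∀ m : ℕ → ℕ,
      (∀ K : Set X, IsCompact K → ∀ δ : ℝ, 0 < δ → ∃ i, ∀ x ∈ K, |g i (m i) x| < δ) →
      (0 : C(X, ℝ)) ∈ closure (Set.range fun i => g i (m i)) := by
    intro m hm
    rw [mem_closure_iff_nhds_basis Stmt10Aux.nhds_basis_zero]
    rintro ⟨K, V⟩ ⟨hK, hV⟩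
    obtain ⟨δ, hδ, hδV⟩ := Metric.mem_uniformity_dist.mp hV
    obtain ⟨i, hi⟩ := hm K hK δ hδ
    refine ⟨g i (m i), ⟨i, rfl⟩, fun x hx => hδV ?_⟩
    simpa [Real.dist_eq] using hi x hx
  by_cases hcase : ∀ N, ∃ i, N ≤ i ∧ ∃ m, ∀ x, |g i m x| < εr i
  · -- degenerate indices are cofinal: choose almost-zero functions directly
    refine ⟨fun i => if h : ∃ m, ∀ x, |g i m x| < εr i then h.choose else 0, hclos _ ?_⟩
    intro K hK δ hδ
    obtain ⟨i₀, hi₀⟩ := exists_nat_one_div_lt hδ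
    obtain ⟨i, hii, hdeg⟩ := hcase i₀
    refine ⟨i, fun x hx => ?_⟩
    rw [dif_pos hdeg]
    calc |g i hdeg.choose x| < εr i := hdeg.choose_spec x
      _ ≤ εr i₀ := hmono i₀ i hii
      _ < δ := hi₀
  · -- from some index on, no almost-zero functions: use the covers
    push_neg at hcase
    obtain ⟨i₁, hi₁⟩ := hcase
    have hne : ∀ n : ℕ, ∀ m, Stmt10Aux.W (g (n + i₁)) (εr (n + i₁)) m ≠ Set.univ := by
      intro n m hu
      obtain ⟨x, hx⟩ := hi₁ (n + i₁) (Nat.le_add_left _ _) m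
      have hxm : x ∈ Stmt10Aux.W (g (n + i₁)) (εr (n + i₁)) m := hu ▸ Set.mem_univ x
      exact absurd (Stmt10Aux.mem_W.mp hxm) (not_lt.mpr hx)
    set 𝒱 : ℕ → Set (Set X) := fun n => Stmt10Aux.𝒰 (g (n + i₁)) (εr (n + i₁)) with h𝒱
    have hsh : ∀ n, IsShrinkableGammaKCover (𝒱 n) := fun n =>
      Stmt10Aux.cover_shrinkable _ (hg _) (hεpos _) (hne n)
    obtain ⟨u, humem, hucov⟩ := hX 𝒱 hsh
    choose msel hmsel using fun n => Stmt10Aux.mem_𝒰.mp (humem n)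
    refine ⟨fun i => if h : i₁ ≤ i then msel (i - i₁) else 0, hclos _ ?_⟩
    intro K hK δ hδ
    obtain ⟨i₀', hi₀'⟩ := exists_nat_one_div_lt hδ
    set i₀ := max i₀' i₁ with hi₀def
    have hune : ∀ n, ∃ x, x ∉ u n := by
      intro n
      obtain ⟨x, hx⟩ := (Set.ne_univ_iff_exists_notMem _).mp (hne n (msel n))
      exact ⟨x, fun hxu => hx ((hmsel n) ▸ hxu)⟩
    choose xp hxp using hune
    set N := i₀ - i₁ with hN
    have hKcomp : IsCompact (K ∪ xp '' Set.Iio N) :=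
      hK.union ((Set.finite_Iio N).image xp).isCompact
    obtain ⟨n, hn⟩ := hucov _ hKcomp
    have hnN : N ≤ n := by
      by_contra hlt
      exact hxp n (hn (Or.inr ⟨n, Nat.lt_of_not_le hlt, rfl⟩))
    refine ⟨n + i₁, fun x hx => ?_⟩
    have hxu : x ∈ u n := hn (Or.inl hx)
    rw [hmsel n] at hxu
    have hmeq : (if h : i₁ ≤ n + i₁ then msel (n + i₁ - i₁) else 0) = msel n := by
      rw [dif_pos (Nat.le_add_left _ _), Nat.add_sub_cancel]
    rw [hmeq]
    have h1 : |g (n + i₁) (msel n) x| < εr (n + i₁) := Stmt10Aux.mem_W.mp hxu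
    have h2 : i₀' ≤ n + i₁ := by
      have : i₀ ≤ n + i₁ := by omega
      exact le_trans (le_max_left _ _) this
    calc |g (n + i₁) (msel n) x| < εr (n + i₁) := h1
      _ ≤ εr i₀' := hmono _ _ h2
      _ < δ := hi₀'
end

section
/- If C_k(X) satisfies S_1(Γ_0, Ω_0), then X satisfies S_1(Γ_k^{sh}, K): for every sequence (F_i) of γ_k-shrinkable cozero γ_k-covers of X, one can select U_i ∈ F_i such that {U_i : i ∈ ℕ} is a k-cover of X. -/
open Filter Topology ContinuousMap

/-- Given a zero-set `s` inside a cozero set `u`, there is a continuous function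
that is `0` on `s` and `1` off `u`. -/
lemma exists_sep_fun {X : Type*} [TopologicalSpace X] {s u : Set X}
    (hs : IsZeroSet s) (hu : IsCozero u) (hsub : s ⊆ u) :
    ∃ f : C(X, ℝ), (∀ x ∈ s, f x = 0) ∧ (∀ x, x ∉ u → f x = 1) := by
  obtain ⟨k, rfl⟩ := hs
  obtain ⟨h, rfl⟩ := hu
  have hden : ∀ x, |k x| + |h x| ≠ 0 := by
    intro x hx
    have h1 : |k x| = 0 ∧ |h x| = 0 := by
      constructor <;> nlinarith [abs_nonneg (k x), abs_nonneg (h x)]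
    have hk : k x = 0 := abs_eq_zero.mp h1.1
    have hh : h x = 0 := abs_eq_zero.mp h1.2
    exact (hsub (show x ∈ {x | k x = 0} from hk)) hh
  refine ⟨⟨fun x => |k x| / (|k x| + |h x|), ?_⟩, ?_, ?_⟩
  · exact (continuous_abs.comp k.continuous).div
      ((continuous_abs.comp k.continuous).add (continuous_abs.comp h.continuous)) hden
  · intro x hx
    have : k x = 0 := hx
    simp [this]
  · intro x hx
    have hh : h x = 0 := by simpa using hx
    have hk : |k x| ≠ 0 := by
      intro h0
      exact hx (hsub (show x ∈ {x | k x = 0} from abs_eq_zero.mp h0))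
    simp [hh, div_self hk]

/-- If `C_k(X)` satisfies `S_1(Γ_0, Ω_0)`, then `X` satisfies `S_1(Γ_k^{sh}, K)`:
from every sequence of γ_k-shrinkable cozero γ_k-covers one may select one member
from each so that the selection is a k-cover. -/
theorem stmt11 {X : Type*} [TopologicalSpace X] [T35Space X]
    (hC : ∀ g : ℕ → ℕ → C(X, ℝ), (∀ i, Tendsto (g i) atTop (𝓝 0)) →
      ∃ m : ℕ → ℕ,
        (0 : C(X, ℝ)) ∈ closure (Set.range fun i => g i (m i))) :
    ∀ 𝒰 : ℕ → Set (Set X), (∀ i, IsShrinkableGammaKCover (𝒰 i)) →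
      ∃ u : ℕ → Set X, (∀ i, u i ∈ 𝒰 i) ∧
        ∀ K : Set X, IsCompact K → ∃ i, K ⊆ u i := by
  intro 𝒰 h𝒰
  -- enumerate each cover
  have hchoice : ∀ i, ∃ e : ℕ → Set X, Function.Injective e ∧ ∀ n, e n ∈ 𝒰 i := by
    intro i
    have hinf := (h𝒰 i).1
    exact ⟨fun n => (hinf.natEmbedding _ n : Set X),
      fun a b hab => (hinf.natEmbedding _).injective (Subtype.ext hab),
      fun n => (hinf.natEmbedding _ n).2⟩
  choose e he_inj he_mem using hchoice
  choose F hF1 hF2 using fun i => (h𝒰 i).2.2.2.2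
  have hf : ∀ i n, ∃ f : C(X, ℝ),
      (∀ x ∈ F i (e i n), f x = 0) ∧ (∀ x, x ∉ e i n → f x = 1) := by
    intro i n
    obtain ⟨hz, hsub⟩ := hF1 i _ (he_mem i n)
    exact exists_sep_fun hz ((h𝒰 i).2.2.1 _ (he_mem i n)) hsub
  choose g hg0 hg1 using hf
  have htend : ∀ i, Tendsto (g i) atTop (𝓝 0) := by
    intro i
    rw [ContinuousMap.tendsto_iff_forall_isCompact_tendstoUniformlyOn]
    intro K hK
    have hfin : {n : ℕ | ¬ K ⊆ F i (e i n)}.Finite := by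
      have hsub : {n : ℕ | ¬ K ⊆ F i (e i n)} ⊆
          (fun n => e i n) ⁻¹' {u ∈ 𝒰 i | ¬ K ⊆ F i u} := fun n hn => ⟨he_mem i n, hn⟩
      exact (((hF2 i K hK).preimage (he_inj i).injOn)).subset hsub
    have hev : ∀ᶠ n in atTop, ∀ x ∈ K, g i n x = 0 := by
      rw [← Nat.cofinite_eq_atTop]
      filter_upwards [hfin.compl_mem_cofinite] with n hn x hx
      exact hg0 i n x ((not_not.mp hn) hx)
    rw [Metric.tendstoUniformlyOn_iff]
    intro ε hε
    filter_upwards [hev] with n hn x hx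
    simpa [hn x hx] using hε
  obtain ⟨m, hm⟩ := hC g htend
  refine ⟨fun i => e i (m i), fun i => he_mem i (m i), ?_⟩
  intro K hK
  have hopen : IsOpen {f : C(X, ℝ) | Set.MapsTo f K (Set.Ioo (-1 : ℝ) 1)} :=
    ContinuousMap.isOpen_setOf_mapsTo hK isOpen_Ioo
  have h0 : (0 : C(X, ℝ)) ∈ {f : C(X, ℝ) | Set.MapsTo f K (Set.Ioo (-1 : ℝ) 1)} := by
    intro x _
    simp
  obtain ⟨f, hfo, hfs⟩ := mem_closure_iff.mp hm _ hopen h0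
  obtain ⟨i, hfi⟩ := hfs
  refine ⟨i, fun x hx => ?_⟩
  by_contra hxu
  have h1 : g i (m i) x = 1 := hg1 i (m i) x hxu
  have h2 : f x ∈ Set.Ioo (-1 : ℝ) 1 := hfo hx
  rw [← hfi] at h2
  rw [h1] at h2
  exact lt_irrefl (1 : ℝ) h2.2
end

section
/- Let U = {U_n : n ∈ ℕ} be a γ_k-shrinkable cozero cover of a Tychonoff space X, witnessed by a γ_k-cover of zero sets {F(U_n)}. Then the set S = {f ∈ C(X) : f ≡ 1 on X∖U_n for some n} is sequentially dense in C_k(X). -/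
open Filter Topology ContinuousMap

/-!
Separate the zero set `F n` from the zero set `X ∖ U n` by a continuous `φₙ` which is `0` on
`F n` and `1` off `U n`, and put `fₙ = h (1 - φₙ) + φₙ`. Then `fₙ ≡ 1` off `U n`, and `fₙ = h`
on `F n`. Every compact set lies in all but finitely many `F n`, so `fₙ` eventually agrees
with `h` on each compact set, which forces `fₙ → h` in the compact-open topology.
-/

lemma IsCozero.isZeroSet_compl {X : Type*} [TopologicalSpace X] {u : Set X} (hu : IsCozero u) :
    IsZeroSet uᶜ := by
  obtain ⟨f, rfl⟩ := hu
  exact ⟨f, by ext x; simp⟩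

lemma IsZeroSet.exists_continuous_zero_one {X : Type*} [TopologicalSpace X] {Z W : Set X}
    (hZ : IsZeroSet Z) (hW : IsZeroSet W) (hd : Disjoint Z W) :
    ∃ φ : C(X, ℝ), Set.EqOn φ 0 Z ∧ Set.EqOn φ 1 W := by
  obtain ⟨g, rfl⟩ := hZ
  obtain ⟨f, rfl⟩ := hW
  have hden : ∀ x, f x ^ 2 + g x ^ 2 ≠ 0 := by
    intro x hx
    have hf : f x = 0 := by nlinarith [sq_nonneg (f x), sq_nonneg (g x)]
    have hg : g x = 0 := by nlinarith [sq_nonneg (f x), sq_nonneg (g x)]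
    exact Set.disjoint_left.mp hd hg hf
  refine ⟨⟨fun x => g x ^ 2 / (f x ^ 2 + g x ^ 2), by fun_prop (disch := exact hden)⟩, ?_, ?_⟩
  · intro x (hx : g x = 0)
    simp [hx]
  · intro x (hx : f x = 0)
    have hgx : g x ^ 2 ≠ 0 := by simpa [hx] using hden x
    simp [hx, hgx]

lemma ContinuousMap.tendsto_of_eventually_eqOn_isCompact {α Y Z : Type*} [TopologicalSpace Y]
    [TopologicalSpace Z] {l : Filter α} {f : α → C(Y, Z)} {g : C(Y, Z)}
    (h : ∀ K, IsCompact K → ∀ᶠ a in l, Set.EqOn (f a) g K) : Tendsto f l (𝓝 g) :=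
  tendsto_nhds_compactOpen.2 fun K hK _ _ hg =>
    (h K hK).mono fun _ ha => hg.congr ha.symm

lemma eventually_subset_of_finite_setOf_not_subset {X : Type*} {F : ℕ → Set X} {K : Set X}
    (hK : {n : ℕ | ¬ K ⊆ F n}.Finite) : ∀ᶠ n in atTop, K ⊆ F n := by
  rw [← Nat.cofinite_eq_atTop]
  exact eventually_cofinite.2 hK

theorem stmt12_general {X : Type*} [TopologicalSpace X]
    (U F : ℕ → Set X)
    (hcoz : ∀ n, IsCozero (U n))
    (hzero : ∀ n, IsZeroSet (F n)) (hsub : ∀ n, F n ⊆ U n)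
    (hγ : ∀ K : Set X, IsCompact K → {n : ℕ | ¬ K ⊆ F n}.Finite) :
    SeqDense {f : C(X, ℝ) | ∃ n, ∀ x ∉ U n, f x = 1} := by
  intro h
  have hsep : ∀ n, ∃ φ : C(X, ℝ), Set.EqOn φ 0 (F n) ∧ Set.EqOn φ 1 (U n)ᶜ := fun n =>
    (hzero n).exists_continuous_zero_one (hcoz n).isZeroSet_compl
      (Set.disjoint_compl_right_iff_subset.2 (hsub n))
  choose φ hφ0 hφ1 using hsep
  refine ⟨fun n => h * (1 - φ n) + φ n, fun n => ⟨n, fun x hx => ?_⟩, ?_⟩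
  · simp [hφ1 n hx]
  · refine tendsto_of_eventually_eqOn_isCompact fun K hK => ?_
    filter_upwards [eventually_subset_of_finite_setOf_not_subset (hγ K hK)] with n hn x hx
    simp [hφ0 n (hn hx)]

/-- If `{U_n}` is a γ_k-shrinkable cozero cover of a Tychonoff space `X`, witnessed
by a γ_k-cover of zero-sets `{F_n}` with `F_n ⊆ U_n`, then the set
`S = {f ∈ C(X) : f ≡ 1 on X∖U_n for some n}` is sequentially dense in `C_k(X)`. -/
theorem stmt12 {X : Type*} [TopologicalSpace X] [T35Space X]
    (U F : ℕ → Set X)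
    (hcoz : ∀ n, IsCozero (U n)) (hproper : ∀ n, U n ≠ Set.univ)
    (hzero : ∀ n, IsZeroSet (F n)) (hsub : ∀ n, F n ⊆ U n)
    (hγ : ∀ K : Set X, IsCompact K → {n : ℕ | ¬ K ⊆ F n}.Finite) :
    SeqDense {f : C(X, ℝ) | ∃ n, ∀ x ∉ U n, f x = 1} :=
  stmt12_general U F hcoz hzero hsub hγ
end

section
/- If C_k(X) satisfies S_1(S, Ω_0) and C_k(X) has a countable dense subset, then C_k(X) satisfies S_1(S, D): for every sequence of sequentially dense subsets one can choose one point from each so that the chosen set is dense. -/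
open Filter Topology ContinuousMap

/-- If `C_k(X)` is separable and satisfies `S_1(S, Ω_0)`, then it satisfies
`S_1(S, D)`. -/
theorem stmt13 {X : Type*} [TopologicalSpace X] [T35Space X]
    (hsep : ∃ D : Set C(X, ℝ), D.Countable ∧ Dense D)
    (h : ∀ S : ℕ → Set C(X, ℝ), (∀ n, SeqDense (S n)) →
      ∃ f : ℕ → C(X, ℝ), (∀ n, f n ∈ S n) ∧
        (0 : C(X, ℝ)) ∈ closure (Set.range f)) :
    ∀ S : ℕ → Set C(X, ℝ), (∀ n, SeqDense (S n)) →
      ∃ f : ℕ → C(X, ℝ), (∀ n, f n ∈ S n) ∧ Dense (Set.range f) := by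
  intro S hS
  obtain ⟨D, hDc, hDd⟩ := hsep
  -- get a countable dense sequence
  obtain ⟨d, hd⟩ : ∃ d : ℕ → C(X, ℝ), insert 0 D = Set.range d :=
    (hDc.insert 0).exists_eq_range (Set.insert_nonempty _ _)
  have hdDense : Dense (Set.range d) := by
    rw [← hd]
    exact hDd.mono (Set.subset_insert _ _)
  -- for each n, apply h to the translated sequence of sequentially dense sets
  have key : ∀ n : ℕ, ∃ f : ℕ → C(X, ℝ),
      (∀ m, f m ∈ (fun g => g - d n) '' S (Nat.pair n m)) ∧
      (0 : C(X, ℝ)) ∈ closure (Set.range f) := by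
    intro n
    apply h
    intro m y
    obtain ⟨u, hu, hut⟩ := hS (Nat.pair n m) (y + d n)
    refine ⟨fun k => u k - d n, fun k => ⟨u k, hu k, rfl⟩, ?_⟩
    have : Tendsto (fun k => u k - d n) atTop (𝓝 (y + d n - d n)) :=
      hut.sub tendsto_const_nhds
    simpa using this
  choose f hf hf0 using key
  refine ⟨fun k => f k.unpair.1 k.unpair.2 + d k.unpair.1, ?_, ?_⟩
  · intro k
    obtain ⟨g, hg, hgeq⟩ := hf k.unpair.1 k.unpair.2
    rw [Nat.pair_unpair k] at hg
    have heq : f k.unpair.1 k.unpair.2 + d k.unpair.1 = g := by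
      rw [← hgeq]; exact sub_add_cancel g _
    show f k.unpair.1 k.unpair.2 + d k.unpair.1 ∈ S k
    rwa [heq]
  · rw [← dense_closure]
    refine Dense.mono ?_ hdDense
    rintro _ ⟨n, rfl⟩
    have hcont : Continuous fun g : C(X, ℝ) => g + d n := continuous_add_right _
    have := map_mem_closure hcont (hf0 n)
      (t := Set.range fun k : ℕ => f k.unpair.1 k.unpair.2 + d k.unpair.1) ?_
    · simpa using this
    · rintro _ ⟨m, rfl⟩
      exact ⟨Nat.pair n m, by simp [Nat.unpair_pair]⟩
end

section
/- If C_k(X) satisfies S_1(Γ_0, Γ_0) at the zero function, then X satisfies S_1(Γ_k^{sh}, Γ_k): for every sequence of γ_k-shrinkable cozero γ_k-covers of X one can select one member from each so that the selected family is a γ_k-cover of X. -/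
/-!
Enumerate the `i`-th cover as `uᵢₙ` and choose `fᵢₙ ∈ C(X, ℝ)` vanishing on the shrinking of `uᵢₙ`
and equal to `1` off `uᵢₙ`. Since every compact set lies in all but finitely many shrinkings,
`fᵢₙ → 0` in `C_k(X)` as `n → ∞`. A diagonal selection `fᵢ,ₘᵢ → 0` eventually maps each compact
`K` into `ℝ ∖ {1}`, which forces `K ⊆ uᵢ,ₘᵢ` for all but finitely many `i`.
-/

open Filter Topology ContinuousMap

theorem exists_continuousMap_eqOn_zero_one_of_isZeroSet_subset_isCozero
    {X : Type*} [TopologicalSpace X] {s u : Set X}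
    (hs : IsZeroSet s) (hu : IsCozero u) (hsu : s ⊆ u) :
    ∃ f : C(X, ℝ), (∀ x ∈ s, f x = 0) ∧ (∀ x ∉ u, f x = 1) := by
  obtain ⟨φ, rfl⟩ := hs
  obtain ⟨ψ, rfl⟩ := hu
  have hden : ∀ x, |φ x| + |ψ x| ≠ 0 := fun x => by
    by_cases hφ : φ x = 0
    · have hψ : ψ x ≠ 0 := hsu hφ
      positivity
    · positivity
  refine ⟨⟨fun x => |φ x| / (|φ x| + |ψ x|),
    (φ.continuous.abs).div ((φ.continuous.abs).add ψ.continuous.abs) hden⟩, ?_, ?_⟩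
  · intro x hx
    simp [show φ x = 0 from hx]
  · intro x hx
    have hψ : ψ x = 0 := by simpa using hx
    have hφ : φ x ≠ 0 := fun h => hsu h hψ
    simp [hψ, hφ]

theorem ContinuousMap.tendsto_of_forall_isCompact_eventually_eqOn
    {α X Y : Type*} [TopologicalSpace X] [TopologicalSpace Y]
    {l : Filter α} {f : α → C(X, Y)} {g : C(X, Y)}
    (h : ∀ K : Set X, IsCompact K → ∀ᶠ a in l, Set.EqOn (f a) g K) :
    Tendsto f l (𝓝 g) := by
  rw [tendsto_nhds_compactOpen]
  intro K hK U _ hgKU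
  filter_upwards [h K hK] with a ha x hx
  rw [ha hx]
  exact hgKU hx

theorem ContinuousMap.eventually_subset_of_tendsto_of_eqOn_compl
    {α X Y : Type*} [TopologicalSpace X] [TopologicalSpace Y] [T1Space Y]
    {l : Filter α} {f : α → C(X, Y)} {g : C(X, Y)} {u : α → Set X} {K : Set X} {y : Y}
    (hf : Tendsto f l (𝓝 g)) (hK : IsCompact K) (hgK : ∀ x ∈ K, g x ≠ y)
    (hfu : ∀ a, ∀ x ∉ u a, f a x = y) :
    ∀ᶠ a in l, K ⊆ u a := by
  have hmaps : ∀ᶠ a in l, Set.MapsTo (f a) K {y}ᶜ :=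
    hf.eventually (eventually_mapsTo hK isOpen_compl_singleton hgK)
  filter_upwards [hmaps] with a ha x hx
  by_contra hxu
  exact ha hx (hfu a x hxu)

theorem IsShrinkableGammaKCover.exists_seq_tendsto_zero
    {X : Type*} [TopologicalSpace X] {𝒰 : Set (Set X)} (h𝒰 : IsShrinkableGammaKCover 𝒰) :
    ∃ (u : ℕ → Set X) (f : ℕ → C(X, ℝ)), (∀ n, u n ∈ 𝒰) ∧ (∀ n, ∀ x ∉ u n, f n x = 1) ∧
      Tendsto f atTop (𝓝 0) := by
  obtain ⟨h𝒰inf, -, hcozero, -, F, hF, hFcover⟩ := h𝒰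
  let e := h𝒰inf.natEmbedding
  have hsep : ∀ n, ∃ f : C(X, ℝ), (∀ x ∈ F (e n), f x = 0) ∧ (∀ x ∉ (e n : Set X), f x = 1) :=
    fun n => exists_continuousMap_eqOn_zero_one_of_isZeroSet_subset_isCozero
      (hF _ (e n).2).1 (hcozero _ (e n).2) (hF _ (e n).2).2
  choose f hf0 hf1 using hsep
  refine ⟨fun n => e n, f, fun n => (e n).2, hf1, ?_⟩
  refine tendsto_of_forall_isCompact_eventually_eqOn fun K hK => ?_
  -- `e` is injective, so it eventually avoids the finitely many members not covering `K`.
  have hK_sub : ∀ᶠ n in atTop, K ⊆ F (e n) := by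
    rw [← Nat.cofinite_eq_atTop]
    filter_upwards [(Subtype.val_injective.comp e.injective).tendsto_cofinite.eventually
      (hFcover K hK).eventually_cofinite_notMem] with n hn
    by_contra hKn
    exact hn ⟨(e n).2, hKn⟩
  filter_upwards [hK_sub] with n hn x hx
  exact hf0 n x (hn hx)

theorem stmt14_general {X : Type*} [TopologicalSpace X]
    (hC : ∀ g : ℕ → ℕ → C(X, ℝ), (∀ i, Tendsto (g i) atTop (𝓝 0)) →
      ∃ m : ℕ → ℕ, Tendsto (fun i => g i (m i)) atTop (𝓝 (0 : C(X, ℝ)))) :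
    ∀ 𝒰 : ℕ → Set (Set X), (∀ i, IsShrinkableGammaKCover (𝒰 i)) →
      ∃ u : ℕ → Set X, (∀ i, u i ∈ 𝒰 i) ∧
        ∀ K : Set X, IsCompact K → {i : ℕ | ¬ K ⊆ u i}.Finite := by
  intro 𝒰 h𝒰
  choose u f hu_mem hf_one hf_tendsto using fun i => (h𝒰 i).exists_seq_tendsto_zero
  obtain ⟨m, hm⟩ := hC f hf_tendsto
  refine ⟨fun i => u i (m i), fun i => hu_mem i (m i), fun K hK => ?_⟩
  have hsub : ∀ᶠ i in atTop, K ⊆ u i (m i) :=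
    eventually_subset_of_tendsto_of_eqOn_compl hm hK (fun _ _ => zero_ne_one)
      (fun i => hf_one i (m i))
  rw [← Nat.cofinite_eq_atTop] at hsub
  exact hsub

/-- If `C_k(X)` satisfies `S_1(Γ_0, Γ_0)` at the zero function, then `X` satisfies
`S_1(Γ_k^{sh}, Γ_k)`: from every sequence of γ_k-shrinkable cozero γ_k-covers one may
select one member from each so that each compact set is contained in all but
finitely many of the selected sets. -/
theorem stmt14 {X : Type*} [TopologicalSpace X] [T35Space X]
    (hC : ∀ g : ℕ → ℕ → C(X, ℝ), (∀ i, Tendsto (g i) atTop (𝓝 0)) →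
      ∃ m : ℕ → ℕ, Tendsto (fun i => g i (m i)) atTop (𝓝 (0 : C(X, ℝ)))) :
    ∀ 𝒰 : ℕ → Set (Set X), (∀ i, IsShrinkableGammaKCover (𝒰 i)) →
      ∃ u : ℕ → Set X, (∀ i, u i ∈ 𝒰 i) ∧
        ∀ K : Set X, IsCompact K → {i : ℕ | ¬ K ⊆ u i}.Finite :=
  stmt14_general hC
end

section
/- If X satisfies S_1(K_cz^ω, Γ_k), then the disjoint union X ⊔ X satisfies S_1(K_cz^ω, Γ_k). -/
open Filter Topology ContinuousMap

def IsCzKCover {Z : Type*} [TopologicalSpace Z] (U : ℕ → Set Z) : Prop :=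
  (∀ n, IsCozero (U n)) ∧ (∀ n, U n ≠ Set.univ) ∧
    ∀ K : Set Z, IsCompact K → ∃ n, K ⊆ U n

/-- Every countable cozero k-cover of `Z` contains a γ_k-subcover. -/
def CzKCoversContainGammaK (Z : Type*) [TopologicalSpace Z] : Prop :=
  ∀ U : ℕ → Set Z, IsCzKCover U →
    ∃ S : Set ℕ, S.Infinite ∧
      ∀ K : Set Z, IsCompact K → {n ∈ S | ¬ K ⊆ U n}.Finite

/-!
Trace a countable cozero k-cover `U` of `X ⊔ X` back to `X` by keeping the points both of whose
copies lie in `U n`. This is a countable cozero k-cover of `X` (multiply the two pulled-back cozero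
functions), and a γ_k-subcover of it indexed by `S` gives one of `U` indexed by the same `S`: a
compact `K ⊆ X ⊔ X` folds onto the compact set `inl⁻¹ K ∪ inr⁻¹ K ⊆ X`, and once that set lies
in the trace of `U n`, `K` lies in `U n`.
-/

open Set

namespace IsCozero

variable {X Y : Type*} [TopologicalSpace X] [TopologicalSpace Y]

theorem preimage {u : Set Y} (hu : IsCozero u) (f : C(X, Y)) : IsCozero (f ⁻¹' u) := by
  obtain ⟨g, rfl⟩ := hu
  exact ⟨g.comp f, rfl⟩

theorem inter {u v : Set X} (hu : IsCozero u) (hv : IsCozero v) : IsCozero (u ∩ v) := by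
  obtain ⟨f, rfl⟩ := hu
  obtain ⟨g, rfl⟩ := hv
  exact ⟨f * g, by ext; simp⟩

end IsCozero

section SumTrace

variable {X : Type*}

def sumTrace (V : Set (X ⊕ X)) : Set X := Sum.inl ⁻¹' V ∩ Sum.inr ⁻¹' V

theorem subset_sumTrace_iff {K : Set X} {V : Set (X ⊕ X)} :
    K ⊆ sumTrace V ↔ Sum.inl '' K ∪ Sum.inr '' K ⊆ V := by
  simp only [sumTrace, subset_inter_iff, union_subset_iff, image_subset_iff]

theorem subset_of_preimage_union_subset_sumTrace {K V : Set (X ⊕ X)}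
    (h : Sum.inl ⁻¹' K ∪ Sum.inr ⁻¹' K ⊆ sumTrace V) : K ⊆ V := by
  rintro (x | x) hx
  · exact (h (Or.inl hx)).1
  · exact (h (Or.inr hx)).2

theorem sumTrace_eq_univ_iff {V : Set (X ⊕ X)} : sumTrace V = univ ↔ V = univ := by
  simp only [← univ_subset_iff, subset_sumTrace_iff, image_univ, range_inl_union_range_inr]

end SumTrace

theorem IsCzKCover.sumTrace {X : Type*} [TopologicalSpace X] {U : ℕ → Set (X ⊕ X)}
    (hU : IsCzKCover U) : IsCzKCover fun n => sumTrace (U n) := by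
  obtain ⟨hcozero, hne_univ, hcompact⟩ := hU
  refine ⟨fun n => ?_, fun n => sumTrace_eq_univ_iff.not.mpr (hne_univ n), fun K hK => ?_⟩
  · exact ((hcozero n).preimage ⟨Sum.inl, continuous_inl⟩).inter
      ((hcozero n).preimage ⟨Sum.inr, continuous_inr⟩)
  · obtain ⟨n, hn⟩ := hcompact _ ((hK.image continuous_inl).union (hK.image continuous_inr))
    exact ⟨n, subset_sumTrace_iff.mpr hn⟩

theorem stmt17_general {X : Type*} [TopologicalSpace X]
    (h : CzKCoversContainGammaK X) : CzKCoversContainGammaK (X ⊕ X) := by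
  intro U hU
  obtain ⟨S, hS_infinite, hS⟩ := h _ hU.sumTrace
  refine ⟨S, hS_infinite, fun K hK => ?_⟩
  have hK_fold : IsCompact (Sum.inl ⁻¹' K ∪ Sum.inr ⁻¹' K) :=
    (IsClosedEmbedding.inl.isCompact_preimage hK).union
      (IsClosedEmbedding.inr.isCompact_preimage hK)
  refine (hS _ hK_fold).subset fun n ⟨hnS, hnK⟩ => ⟨hnS, fun hsub => hnK ?_⟩
  exact subset_of_preimage_union_subset_sumTrace hsub

/-- If every countable cozero k-cover of `X` contains a γ_k-subcover, then the same
holds for the topological sum `X ⊔ X`. -/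
theorem stmt17 {X : Type*} [TopologicalSpace X] [T35Space X]
    (h : CzKCoversContainGammaK X) : CzKCoversContainGammaK (X ⊕ X) :=
  stmt17_general h
end

section
/- If X is hemicompact, then X satisfies S_1(K, Γ_k): for every sequence (U_n) of open k-covers of X one can choose U_n ∈ U_n such that {U_n : n ∈ ℕ} is a γ_k-cover of X. -/
open Filter Topology

/-- If `X` is hemicompact, then `X` satisfies `S_1(K, Γ_k)`: from each open k-cover in
a sequence one may choose a member so that every compact set is contained in all but
finitely many chosen sets. -/
theorem stmt19 {X : Type*} [TopologicalSpace X] [T2Space X]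
    (hhemi : ∃ K : ℕ → Set X, (∀ n, IsCompact (K n)) ∧ Monotone K ∧
      ∀ C : Set X, IsCompact C → ∃ n, C ⊆ K n) :
    ∀ 𝒰 : ℕ → Set (Set X), (∀ n, IsKCover (𝒰 n)) →
      ∃ u : ℕ → Set X, (∀ n, u n ∈ 𝒰 n) ∧
        ∀ C : Set X, IsCompact C → {n : ℕ | ¬ C ⊆ u n}.Finite := by
  obtain ⟨K, hKc, hKm, hKall⟩ := hhemi
  intro 𝒰 h𝒰
  choose u hu hKu using fun n => (h𝒰 n).2.2 (K n) (hKc n)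
  refine ⟨u, hu, fun C hC => ?_⟩
  obtain ⟨m, hm⟩ := hKall C hC
  apply Set.Finite.subset (Set.finite_Iio m)
  intro n hn
  by_contra h
  exact hn (hm.trans ((hKm (not_lt.mp h)).trans (hKu n)))
end
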